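/- arXiv:2202.05077 — 5 statements merged into one kernel-verified Lean document; each statement's English description precedes it below -/
import Mathlib

section
/- For every nonnegative integer k one has C(-1/3,k) * C(-2/3,k) = C(2k,k)*C(3k,k)/27^k, where C(x,k) denotes the generalized binomial coefficient. -/
/-- Generalized binomial coefficient `C(x, k) = x(x-1)⋯(x-k+1)/k!` for rational `x`. -/
def gbc (x : ℚ) (k : ℕ) : ℚ :=
  (∏ i ∈ Finset.range k, (x - i)) / (Nat.factorial k)

open Finset Nat

/- The factors of index `i` contribute `(-1/3 - i) (-2/3 - i) · 27 · (i + 1) = (3i + 1)(3i + 2)(3i + 3)`,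
the three factors of `(3k)!` added at step `i`. -/
theorem prod_neg_third_mul_prod_neg_two_thirds_mul_factorial (k : ℕ) :
    (∏ i ∈ range k, (-1/3 - i : ℚ)) * (∏ i ∈ range k, (-2/3 - i : ℚ)) * 27 ^ k * k ! =
      (3 * k)! := by
  induction k with
  | zero => simp
  | succ n ih =>
    rw [prod_range_succ, prod_range_succ, show 3 * (n + 1) = 3 * n + 1 + 1 + 1 by ring,
      factorial_succ, factorial_succ, factorial_succ, factorial_succ]
    push_cast
    rw [← ih]
    ring

theorem gbc_neg_third_mul_gbc_neg_two_thirds (k : ℕ) :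
    gbc (-1/3) k * gbc (-2/3) k = (3 * k)! / (27 ^ k * k ! ^ 3) := by
  rw [gbc, gbc, ← prod_neg_third_mul_prod_neg_two_thirds_mul_factorial]
  have : (k ! : ℚ) ≠ 0 := by positivity
  field_simp

theorem choose_two_mul_mul_choose_three_mul_mul_factorial_pow (k : ℕ) :
    (2 * k).choose k * (3 * k).choose k * k ! ^ 3 = (3 * k)! := by
  have h2 := choose_mul_factorial_mul_factorial (show k ≤ 2 * k by omega)
  have h3 := choose_mul_factorial_mul_factorial (show k ≤ 3 * k by omega)
  rw [show 2 * k - k = k by omega] at h2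
  rw [show 3 * k - k = 2 * k by omega, ← h2] at h3
  rw [← h3]
  ring

theorem stmt3 (k : ℕ) :
    gbc (-1/3) k * gbc (-2/3) k =
      (Nat.choose (2 * k) k) * (Nat.choose (3 * k) k) / (27 : ℚ) ^ k := by
  rw [gbc_neg_third_mul_gbc_neg_two_thirds, ← choose_two_mul_mul_choose_three_mul_mul_factorial_pow]
  have : (k ! : ℚ) ≠ 0 := by positivity
  push_cast
  field_simp
end

section
/- For every nonnegative integer k one has C(-1/4,k) * C(-3/4,k) = C(2k,k)*C(4k,2k)/64^k, where C(x,k) denotes the generalized binomial coefficient. -/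
open Finset

lemma prod_range_two_mul_sub (x : ℚ) (k : ℕ) :
    ∏ j ∈ range (2 * k), (2 * x - j) =
      4 ^ k * ((∏ i ∈ range k, (x - i)) * ∏ i ∈ range k, (x - 1 / 2 - i)) := by
  induction k with
  | zero => simp
  | succ k ih =>
    rw [show 2 * (k + 1) = 2 * k + 1 + 1 by ring, prod_range_succ, prod_range_succ, ih,
      prod_range_succ, prod_range_succ]
    push_cast
    ring

lemma gbc_mul_gbc_sub_half (x : ℚ) (k : ℕ) :
    gbc x k * gbc (x - 1 / 2) k = gbc (2 * x) (2 * k) * (2 * k).choose k / 4 ^ k := by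
  have hfact : ((2 * k).factorial : ℚ) = (2 * k).choose k * k.factorial * k.factorial := by
    rw [two_mul, ← Nat.add_choose_mul_factorial_mul_factorial]
    push_cast
    ring
  have hchoose : ((2 * k).choose k : ℚ) ≠ 0 := by
    exact_mod_cast (Nat.choose_pos (by omega)).ne'
  unfold gbc
  rw [prod_range_two_mul_sub, hfact]
  field_simp

lemma gbc_neg_one (n : ℕ) : gbc (-1) n = (-1) ^ n := by
  have hprod : ∏ i ∈ range n, ((-1 : ℚ) - i) = (-1) ^ n * n.factorial := by
    induction n with
    | zero => simp
    | succ n ih =>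
      rw [prod_range_succ, ih, Nat.factorial_succ]
      push_cast
      ring
  rw [gbc, hprod, mul_div_cancel_right₀ _ (by positivity)]

lemma gbc_neg_half (n : ℕ) : gbc (-1 / 2) n = (-1) ^ n * (2 * n).choose n / 4 ^ n := by
  have h := gbc_mul_gbc_sub_half (-1 / 2) n
  rw [show (-1 / 2 : ℚ) - 1 / 2 = -1 by norm_num, show 2 * (-1 / 2 : ℚ) = -1 by norm_num,
    gbc_neg_one, gbc_neg_one, pow_mul, neg_one_sq, one_pow, one_mul] at h
  rw [mul_div_assoc, ← h, mul_left_comm, ← mul_pow, neg_one_mul, neg_neg, one_pow, mul_one]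

theorem stmt4 (k : ℕ) :
    gbc (-1/4) k * gbc (-3/4) k =
      (Nat.choose (2 * k) k) * (Nat.choose (4 * k) (2 * k)) / (64 : ℚ) ^ k := by
  have h := gbc_mul_gbc_sub_half (-1 / 4) k
  rw [show (-1 / 4 : ℚ) - 1 / 2 = -3 / 4 by norm_num, show 2 * (-1 / 4 : ℚ) = -1 / 2 by norm_num,
    gbc_neg_half, pow_mul, neg_one_sq, one_pow, one_mul, show 2 * (2 * k) = 4 * k by ring] at h
  rw [h, show (64 : ℚ) = 4 ^ 2 * 4 by norm_num, mul_pow, ← pow_mul]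
  field_simp
end

section
/- For every nonnegative integer k one has C(-1/6,k) * C(-5/6,k) = C(3k,k)*C(6k,3k)/432^k, where C(x,k) denotes the generalized binomial coefficient. -/
open Nat

lemma gbc_succ (x : ℚ) (k : ℕ) : gbc x (k + 1) = gbc x k * (x - k) / (k + 1) := by
  rw [gbc, gbc, Finset.prod_range_succ, factorial_succ]
  push_cast
  field_simp

lemma cast_choose_mul_choose (k : ℕ) :
    ((3 * k).choose k * (6 * k).choose (3 * k) : ℚ) = (6 * k)! / (k ! * (2 * k)! * (3 * k)!) := by
  rw [cast_choose ℚ (by omega : k ≤ 3 * k), cast_choose ℚ (by omega : 3 * k ≤ 6 * k),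
    show 3 * k - k = 2 * k by omega, show 6 * k - 3 * k = 3 * k by omega]
  field_simp

lemma cast_choose_mul_choose_succ (k : ℕ) :
    ((3 * (k + 1)).choose (k + 1) * (6 * (k + 1)).choose (3 * (k + 1)) : ℚ) =
      (3 * k).choose k * (6 * k).choose (3 * k) * (12 * (6 * k + 1) * (6 * k + 5) / (k + 1) ^ 2) := by
  rw [cast_choose_mul_choose, cast_choose_mul_choose, show 6 * (k + 1) = 6 * k + 5 + 1 by ring,
    show 2 * (k + 1) = 2 * k + 1 + 1 by ring, show 3 * (k + 1) = 3 * k + 2 + 1 by ring]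
  simp only [factorial_succ]
  push_cast
  field_simp
  ring

theorem stmt5 (k : ℕ) :
    gbc (-1/6) k * gbc (-5/6) k =
      (Nat.choose (3 * k) k) * (Nat.choose (6 * k) (3 * k)) / (432 : ℚ) ^ k := by
  induction k with
  | zero => simp [gbc]
  | succ k ih =>
    rw [gbc_succ, gbc_succ, cast_choose_mul_choose_succ]
    linear_combination (norm := skip) ((-1 / 6 - k) * (-5 / 6 - k) / (k + 1) ^ 2 : ℚ) * ih
    field_simp
    ring
end

section
/- Let p be an odd prime, n ∈ {1,…,(p-1)/2}, and t ∈ ℤ_p. Then C((p-1)/2 + pt, n) ≡ C((p-1)/2, n) * (1 - 2pt·Σ_{k=1}^n 1/(2k-1) + 2p^2 t (t·(Σ_{k=1}^n 1/(2k-1))^2 - (t+1)·Σ_{k=1}^n 1/(2k-1)^2)) (mod p^3). -/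
/-- `a ≡ b (mod p^n)` in `ℤ_p` (rationals with denominator coprime to `p`). -/
def PadicCong (p n : ℕ) (a b : ℚ) : Prop :=
  ∃ c : ℚ, ¬ p ∣ c.den ∧ a - b = (p : ℚ) ^ n * c

/-!
Both binomial coefficients have the shape `∏_{k<n} (y - (2k+1)) / ∏_{k<n} (2k+2)`, with
`y = p(1+2t)` and `y = p` respectively, and `2k+2 < p` is a unit at `p`. With `a_k = 2k+1`, also
units at `p`, the ratio `∏ (p(1+2t) - a_k) / ∏ (p - a_k) = ∏ (1 + 2pt/(p - a_k))` expands to second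
order in `p` as `1 - 2ptS + 2p²t(tS² - (t+1)T)` with `S = ∑ 1/a_k`, `T = ∑ 1/a_k²`. That the
error is a multiple of `p³` follows by induction on the number of factors from one polynomial
identity, valid in any commutative ring in which the `a_k` are invertible.
-/

open Finset

/-- `ℤ_(p)` inside `ℚ`; `PadicCong p n a b` says `a - b ∈ p ^ n ℤ_(p)`. -/
def ratIntegralAt (p : ℕ) [Fact p.Prime] : Subring ℚ where
  carrier := {q | ¬ p ∣ q.den}
  zero_mem' := by simp [(Fact.out : p.Prime).ne_one]
  one_mem' := by simp [(Fact.out : p.Prime).ne_one]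
  add_mem' {a b} ha hb hab :=
    (Fact.out : p.Prime).not_dvd_mul ha hb (hab.trans (Rat.add_den_dvd a b))
  mul_mem' {a b} ha hb hab :=
    (Fact.out : p.Prime).not_dvd_mul ha hb (hab.trans (Rat.mul_den_dvd a b))
  neg_mem' {a} ha := by simpa [Rat.den_neg_eq_den] using ha

section RatIntegralAt

variable {p : ℕ} [Fact p.Prime]

theorem mem_ratIntegralAt {q : ℚ} : q ∈ ratIntegralAt p ↔ ¬ p ∣ q.den :=
  Iff.rfl

theorem inv_natCast_mem_ratIntegralAt {k : ℕ} (hk : ¬ p ∣ k) : (k : ℚ)⁻¹ ∈ ratIntegralAt p := by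
  rw [mem_ratIntegralAt, Rat.inv_natCast_den]
  split_ifs <;> simp_all

theorem PadicCong.mul_left {n : ℕ} {a b c : ℚ} (hc : c ∈ ratIntegralAt p)
    (h : PadicCong p n a b) : PadicCong p n (c * a) (c * b) := by
  obtain ⟨d, hd, hab⟩ := h
  exact ⟨c * d, mul_mem hc hd, by rw [← mul_sub, hab]; ring⟩

end RatIntegralAt

theorem gbc_eq_prod_div (x : ℚ) (n : ℕ) : gbc x n = ∏ i ∈ range n, (x - i) / (i + 1) := by
  rw [gbc, ← prod_range_add_one_eq_factorial, prod_div_distrib]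
  push_cast
  rfl

theorem gbc_sub_one_div_two (y : ℚ) (n : ℕ) :
    gbc ((y - 1) / 2) n =
      (∏ i ∈ range n, (y - (2 * i + 1))) / ∏ i ∈ range n, (2 * (i : ℚ) + 2) := by
  rw [gbc_eq_prod_div, ← prod_div_distrib]
  refine prod_congr rfl fun i _ ↦ ?_
  field_simp
  ring

section ShiftFactor

variable {R : Type*} [CommRing R]

def shiftFactor (p t S T : R) : R :=
  1 - 2 * p * t * S + 2 * p ^ 2 * t * (t * S ^ 2 - (t + 1) * T)

theorem shiftFactor_mul_sub_sub_mul_shiftFactor (p t S T a b : R) (hab : a * b = 1) :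
    shiftFactor p t S T * (p * (1 + 2 * t) - a) - (p - a) * shiftFactor p t (b + S) (b ^ 2 + T)
      = p ^ 3 * (2 * t * b ^ 2 - 4 * t ^ 2 * S * b + 4 * t ^ 3 * S ^ 2
          - 4 * t ^ 2 * (t + 1) * T) := by
  unfold shiftFactor
  linear_combination
    (-2 * p * t + 4 * p ^ 2 * t ^ 2 * S + 2 * p ^ 2 * t ^ 2 * b - 2 * p ^ 2 * t * (t + 1) * b) * hab

theorem exists_mem_prod_sub_prod_mul_shiftFactor_eq_pow_three_mul {ι : Type*} (A : Subring R)
    {p t : R} (hp : p ∈ A) (ht : t ∈ A) {a b : ι → R} (s : Finset ι) (ha : ∀ k ∈ s, a k ∈ A)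
    (hb : ∀ k ∈ s, b k ∈ A) (hab : ∀ k ∈ s, a k * b k = 1) :
    ∃ c ∈ A, ∏ k ∈ s, (p * (1 + 2 * t) - a k)
      - (∏ k ∈ s, (p - a k)) * shiftFactor p t (∑ k ∈ s, b k) (∑ k ∈ s, b k ^ 2) = p ^ 3 * c := by
  induction s using Finset.cons_induction with
  | empty => exact ⟨0, zero_mem A, by simp [shiftFactor]⟩
  | cons j s hj ih =>
    simp only [mem_cons, forall_eq_or_imp] at ha hb hab
    obtain ⟨c, hc, hD⟩ := ih ha.2 hb.2 hab.2
    have hstep := shiftFactor_mul_sub_sub_mul_shiftFactor p t (∑ k ∈ s, b k)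
      (∑ k ∈ s, b k ^ 2) (a j) (b j) hab.1
    refine ⟨(p * (1 + 2 * t) - a j) * c + (∏ k ∈ s, (p - a k)) *
      (2 * t * b j ^ 2 - 4 * t ^ 2 * (∑ k ∈ s, b k) * b j
        + 4 * t ^ 3 * (∑ k ∈ s, b k) ^ 2 - 4 * t ^ 2 * (t + 1) * ∑ k ∈ s, b k ^ 2), ?_, ?_⟩
    · aesop (add safe apply [prod_mem, sum_mem])
    · rw [prod_cons, prod_cons, sum_cons, sum_cons]
      linear_combination (p * (1 + 2 * t) - a j) * hD + (∏ k ∈ s, (p - a k)) * hstep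

end ShiftFactor

theorem padicCong_prod_shift_odd {p : ℕ} [Fact p.Prime] {t : ℚ} (ht : ¬ p ∣ t.den) {m : ℕ}
    (hm : 2 * m < p) :
    PadicCong p 3 (∏ k ∈ range m, (p * (1 + 2 * t) - (2 * k + 1)))
      ((∏ k ∈ range m, ((p : ℚ) - (2 * k + 1))) *
        shiftFactor (p : ℚ) t (∑ k ∈ range m, 1 / (2 * k + 1))
          (∑ k ∈ range m, 1 / (2 * k + 1) ^ 2)) := by
  have hodd (k : ℕ) (hk : k ∈ range m) : ¬ p ∣ 2 * k + 1 :=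
    Nat.not_dvd_of_pos_of_lt (by omega) (by simp at hk; omega)
  obtain ⟨c, hc, hD⟩ := exists_mem_prod_sub_prod_mul_shiftFactor_eq_pow_three_mul
    (ratIntegralAt p) (a := fun k : ℕ ↦ 2 * k + 1) (b := fun k : ℕ ↦ 1 / (2 * k + 1))
    (natCast_mem _ p) ht (range m)
    (fun k _ ↦ by simpa using natCast_mem (ratIntegralAt p) (2 * k + 1))
    (fun k hk ↦ by simpa using inv_natCast_mem_ratIntegralAt (hodd k hk))
    (fun k _ ↦ mul_one_div_cancel (by positivity))
  simp only [div_pow, one_pow] at hD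
  exact ⟨c, hc, hD⟩

theorem stmt8_general (p : ℕ) (hp : p.Prime) (n : ℕ)
    (hn2 : n ≤ (p - 1) / 2) (t : ℚ) (ht : ¬ p ∣ t.den) :
    PadicCong p 3 (gbc (((p : ℚ) - 1) / 2 + p * t) n)
      (gbc (((p : ℚ) - 1) / 2) n *
        (1 - 2 * p * t * (∑ k ∈ Finset.range n, (1 : ℚ) / (2 * k + 1)) +
          2 * p ^ 2 * t *
            (t * (∑ k ∈ Finset.range n, (1 : ℚ) / (2 * k + 1)) ^ 2 -
              (t + 1) * ∑ k ∈ Finset.range n, (1 : ℚ) / (2 * k + 1) ^ 2))) := by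
  have := Fact.mk hp
  have hn : 2 * n < p := by have := hp.pos; omega
  have hden : (∏ i ∈ range n, (2 * (i : ℚ) + 2))⁻¹ ∈ ratIntegralAt p := by
    rw [← prod_inv_distrib]
    refine prod_mem fun i hi ↦ ?_
    have hi' : ¬ p ∣ 2 * i + 2 := Nat.not_dvd_of_pos_of_lt (by omega) (by simp at hi; omega)
    simpa using inv_natCast_mem_ratIntegralAt hi'
  have key := (padicCong_prod_shift_odd ht hn).mul_left hden
  unfold shiftFactor at key
  rw [show ((p : ℚ) - 1) / 2 + p * t = (p * (1 + 2 * t) - 1) / 2 by ring,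
    gbc_sub_one_div_two, gbc_sub_one_div_two]
  convert key using 1 <;> ring

theorem stmt8 (p : ℕ) (hp : p.Prime) (hodd : Odd p) (n : ℕ) (hn1 : 1 ≤ n)
    (hn2 : n ≤ (p - 1) / 2) (t : ℚ) (ht : ¬ p ∣ t.den) :
    PadicCong p 3 (gbc (((p : ℚ) - 1) / 2 + p * t) n)
      (gbc (((p : ℚ) - 1) / 2) n *
        (1 - 2 * p * t * (∑ k ∈ Finset.range n, (1 : ℚ) / (2 * k + 1)) +
          2 * p ^ 2 * t *
            (t * (∑ k ∈ Finset.range n, (1 : ℚ) / (2 * k + 1)) ^ 2 -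
              (t + 1) * ∑ k ∈ Finset.range n, (1 : ℚ) / (2 * k + 1) ^ 2))) :=
  stmt8_general p hp n hn2 t ht
end

section
/- Let p be an odd prime, a ∈ ℤ_p with a ≢ 0, -1 (mod p), and a' = (a - ⟨a⟩_p)/p. Then C(a, p-1)·C(-1-a, p-1)·C(2(p-1), p-1) / (4^{p-1}·p) ≡ -a'(a'+1)/(a(a+1)) · p^2 (mod p^3). -/
open Finset
open scoped Nat

theorem FiniteField.prod_univ_erase_sub_eq_neg_one {K : Type*} [Field K] [Fintype K]
    [DecidableEq K] (x : K) : ∏ y ∈ univ.erase x, (x - y) = -1 := by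
  have h := congrArg Units.val (FiniteField.prod_univ_units_id_eq_neg_one (K := K))
  rw [Units.coe_prod, Units.val_neg, Units.val_one] at h
  rw [← h]
  refine prod_bij' (fun y hy => Units.mk0 (x - y) (sub_ne_zero.2 (ne_of_mem_erase hy).symm))
    (fun u _ => x - u) (by simp) (fun u _ => ?_) (by simp) (by simp) (by simp)
  simp

theorem Nat.Prime.dvd_choose_two_mul_pred {p : ℕ} (hp : p.Prime) :
    p ∣ (2 * (p - 1)).choose (p - 1) := by
  have := hp.two_le
  rw [two_mul]
  exact hp.dvd_choose_add (by omega) (by omega) (by omega)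

theorem Nat.Prime.not_dvd_den_mul {p : ℕ} (hp : p.Prime) {x y : ℚ} (hx : ¬ p ∣ x.den)
    (hy : ¬ p ∣ y.den) : ¬ p ∣ (x * y).den :=
  fun h => (hp.dvd_mul.1 (h.trans (Rat.mul_den_dvd x y))).elim hx hy

theorem PadicCong.mul {p m n : ℕ} (hp : p.Prime) {x u v : ℚ} (hx : PadicCong p m x 0)
    (huv : PadicCong p n u v) : PadicCong p (m + n) (x * u) (x * v) := by
  obtain ⟨c, hc, hxc⟩ := hx
  obtain ⟨d, hd, huvd⟩ := huv
  refine ⟨c * d, hp.not_dvd_den_mul hc hd, ?_⟩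
  rw [sub_zero] at hxc
  rw [← mul_sub, hxc, huvd]
  ring

/-- The `p`-adic unit by which the left side of the theorem differs from `-a'(a'+1) p^2`. -/
def gbcUnitPart (p r : ℕ) (a : ℚ) : ℚ :=
  (∏ i ∈ (range (p - 1)).erase r, (a - i)) * (∏ i ∈ (range (p - 1)).erase (p - 1 - r),
    (-1 - a - i)) * ((2 * (p - 1)).choose (p - 1) / p) / ((p - 1)! ^ 2 * 4 ^ (p - 1))

theorem gbc_mul_gbc_mul_choose_div_eq {p r : ℕ} {a c : ℚ} (hac : a - r = p * c)
    (hr0 : r ≠ 0) (hr : r < p - 1) :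
    gbc a (p - 1) * gbc (-1 - a) (p - 1) * (2 * (p - 1)).choose (p - 1) / (4 ^ (p - 1) * p)
      = -(c * (c + 1)) * p ^ 2 * gbcUnitPart p r a := by
  have hp : (p : ℚ) ≠ 0 := Nat.cast_ne_zero.2 (by omega)
  have hs : -1 - a - ((p - 1 - r : ℕ) : ℚ) = -(p * (c + 1)) := by
    rw [Nat.cast_sub (by omega), Nat.cast_sub (by omega)]
    linear_combination -hac
  rw [gbc, gbc, gbcUnitPart, ← mul_prod_erase _ (fun i : ℕ => a - i) (mem_range.2 hr),
    ← mul_prod_erase _ (fun i : ℕ => -1 - a - i) (mem_range.2 (by omega : p - 1 - r < p - 1)),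
    hac, hs]
  field_simp

variable {p : ℕ} [Fact p.Prime]

namespace ZMod

theorem prod_range_erase_sub_eq_neg_one {t : ℕ} (ht : t < p) :
    ∏ i ∈ (range p).erase t, ((t : ZMod p) - i) = -1 := by
  rw [← FiniteField.prod_univ_erase_sub_eq_neg_one (t : ZMod p)]
  refine prod_nbij' (↑) ZMod.val (fun i hi => ?_) (fun y hy => ?_) (fun i hi => ?_)
    (fun y _ => ZMod.natCast_zmod_val y) (fun _ _ => rfl)
  · simp only [mem_erase, mem_range] at hi
    simp only [mem_erase, mem_univ, and_true, Ne]
    rw [ZMod.natCast_eq_natCast_iff', Nat.mod_eq_of_lt hi.2, Nat.mod_eq_of_lt ht]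
    exact hi.1
  · simp only [mem_erase, mem_univ, and_true] at hy
    simp only [mem_erase, mem_range, ZMod.val_lt, and_true]
    rintro rfl
    exact hy (ZMod.natCast_zmod_val y).symm
  · simp only [mem_erase, mem_range] at hi
    exact ZMod.val_cast_of_lt hi.2

theorem prod_range_pred_erase_sub_mul {t : ℕ} (ht : t < p - 1) :
    (∏ i ∈ (range (p - 1)).erase t, ((t : ZMod p) - i)) * (t + 1) = -1 := by
  have hp := (Fact.out : p.Prime).one_lt
  have h := prod_range_erase_sub_eq_neg_one (p := p) (t := t) (by omega)
  have hrange : range p = insert (p - 1) (range (p - 1)) := by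
    rw [← range_add_one, Nat.sub_add_cancel hp.le]
  rw [hrange, erase_insert_of_ne (by omega), prod_insert (by simp), Nat.cast_sub hp.le,
    ZMod.natCast_self] at h
  rw [← h]
  ring

theorem prod_erase_sub_mul_prod_erase_neg_one_sub {r : ℕ} (hr0 : r ≠ 0) (hr : r < p - 1) :
    (∏ i ∈ (range (p - 1)).erase r, ((r : ZMod p) - i)) *
      (∏ i ∈ (range (p - 1)).erase (p - 1 - r), (-1 - (r : ZMod p) - i)) * (r * (r + 1))
      = -1 := by
  have hp := (Fact.out : p.Prime).one_lt
  have e1 := prod_range_pred_erase_sub_mul (p := p) hr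
  have e2 := prod_range_pred_erase_sub_mul (p := p) (t := p - 1 - r) (by omega)
  rw [Nat.cast_sub (by omega), Nat.cast_sub hp.le, ZMod.natCast_self, Nat.cast_one,
    zero_sub] at e2
  linear_combination
    (∏ i ∈ (range (p - 1)).erase (p - 1 - r), (-1 - (r : ZMod p) - i)) * r * e1 + e2

theorem choose_two_mul_pred_div_self :
    (((2 * (p - 1)).choose (p - 1) / p : ℕ) : ZMod p) = -1 := by
  have hp := (Fact.out : p.Prime)
  have := hp.two_le
  obtain ⟨k, hk⟩ := hp.dvd_choose_two_mul_pred
  rw [hk, Nat.mul_div_cancel_left _ hp.pos]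
  -- `(2p - 1) k = C(2p - 1, p)`, and the right side is `≡ 1` by Lucas' theorem
  have hsucc := Nat.add_one_mul_choose_eq (2 * (p - 1)) (p - 1)
  rw [hk, show 2 * (p - 1) + 1 = (p - 1) + p * 1 by omega, Nat.sub_add_cancel hp.one_le,
    mul_comm p k, ← mul_assoc] at hsucc
  have hk' := Nat.eq_of_mul_eq_mul_right hp.pos hsucc
  have hlucas := Choose.choose_modEq_choose_mod_mul_choose_div_nat (p := p)
    (n := (p - 1) + p * 1) (k := p)
  rw [Nat.add_mul_mod_self_left, Nat.add_mul_div_left _ _ hp.pos, Nat.mod_self,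
    Nat.div_self hp.pos, Nat.mod_eq_of_lt (by omega), Nat.div_eq_of_lt (by omega), ← hk']
    at hlucas
  have := (ZMod.natCast_eq_natCast_iff _ _ _).2 hlucas
  push_cast [Nat.cast_sub hp.one_lt.le, ZMod.natCast_self, Nat.choose_zero_right,
    Nat.choose_self] at this
  linear_combination -this

theorem factorial_pred_sq_mul_four_pow_pred (hp2 : p ≠ 2) :
    ((p - 1)! : ZMod p) ^ 2 * 4 ^ (p - 1) = 1 := by
  have h2 : (2 : ZMod p) ≠ 0 := Ring.two_ne_zero (by rwa [ZMod.ringChar_zmod_n])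
  have h4 : (4 : ZMod p) ≠ 0 := by
    rw [show (4 : ZMod p) = 2 ^ 2 by norm_num]
    exact pow_ne_zero 2 h2
  rw [wilsons_lemma, pow_card_sub_one_eq_one h4]
  norm_num

end ZMod

namespace PadicInt

@[simp, norm_cast]
theorem coe_prod {ι : Type*} (s : Finset ι) (f : ι → ℤ_[p]) :
    (((∏ i ∈ s, f i) : ℤ_[p]) : ℚ_[p]) = ∏ i ∈ s, (f i : ℚ_[p]) :=
  map_prod Coe.ringHom f s

@[simp, norm_cast]
theorem coe_ofNat (n : ℕ) [n.AtLeastTwo] : ((ofNat(n) : ℤ_[p]) : ℚ_[p]) = ofNat(n) :=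
  rfl

theorem norm_le_inv_of_toZMod_eq_zero {x : ℤ_[p]} (h : toZMod x = 0) : ‖x‖ ≤ (p : ℝ)⁻¹ := by
  rw [← RingHom.mem_ker, ker_toZMod, maximalIdeal_eq_span_p, Ideal.mem_span_singleton] at h
  obtain ⟨y, rfl⟩ := h
  rw [norm_mul, norm_p]
  exact mul_le_of_le_one_right (by positivity) y.norm_le_one

theorem norm_eq_one_of_toZMod_ne_zero {x : ℤ_[p]} (h : toZMod x ≠ 0) : ‖x‖ = 1 := by
  rw [← isUnit_iff]
  by_contra hx
  exact h <| by
    rwa [← RingHom.mem_ker, ker_toZMod, IsLocalRing.mem_maximalIdeal, mem_nonunits_iff]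

end PadicInt

theorem Padic.norm_ratCast_le_one_iff {q : ℚ} : ‖(q : ℚ_[p])‖ ≤ 1 ↔ ¬ p ∣ q.den := by
  refine ⟨fun h hdvd => ?_, Padic.norm_rat_le_one⟩
  have hunit := PadicInt.isUnit_iff.1 (PadicInt.isUnit_den q h)
  have hlt := (PadicInt.norm_lt_one_iff_dvd (q.den : ℤ_[p])).2 (Nat.cast_dvd_cast hdvd)
  exact hlt.ne hunit

theorem padicCong_of_norm_le {n : ℕ} {x y : ℚ}
    (h : ‖((x - y : ℚ) : ℚ_[p])‖ ≤ (p : ℝ)⁻¹ ^ n) : PadicCong p n x y := by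
  have hp : (p : ℚ) ≠ 0 := Nat.cast_ne_zero.2 (Fact.out : p.Prime).ne_zero
  refine ⟨(x - y) / p ^ n, ?_, by field_simp⟩
  rw [← Padic.norm_ratCast_le_one_iff, Rat.cast_div, Rat.cast_pow, Rat.cast_natCast, norm_div,
    norm_pow, Padic.norm_p]
  exact div_le_one_of_le₀ h (by positivity)

theorem padicCong_one_div_div {u₁ u₂ v₁ v₂ : ℚ} {x₁ x₂ y₁ y₂ : ℤ_[p]}
    (hx₁ : (x₁ : ℚ_[p]) = u₁) (hy₁ : (y₁ : ℚ_[p]) = u₂) (hx₂ : (x₂ : ℚ_[p]) = v₁)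
    (hy₂ : (y₂ : ℚ_[p]) = v₂) (hy₁0 : PadicInt.toZMod y₁ ≠ 0) (hy₂0 : PadicInt.toZMod y₂ ≠ 0)
    (h : PadicInt.toZMod x₁ * PadicInt.toZMod y₂ = PadicInt.toZMod x₂ * PadicInt.toZMod y₁) :
    PadicCong p 1 (u₁ / u₂) (v₁ / v₂) := by
  have hy₁1 := PadicInt.norm_eq_one_of_toZMod_ne_zero hy₁0
  have hy₂1 := PadicInt.norm_eq_one_of_toZMod_ne_zero hy₂0
  have hy₁' : (y₁ : ℚ_[p]) ≠ 0 := PadicInt.coe_ne_zero.2 fun h => hy₁0 (by rw [h, map_zero])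
  have hy₂' : (y₂ : ℚ_[p]) ≠ 0 := PadicInt.coe_ne_zero.2 fun h => hy₂0 (by rw [h, map_zero])
  have hnum : PadicInt.toZMod (x₁ * y₂ - y₁ * x₂) = 0 := by
    rw [map_sub, map_mul, map_mul, h, mul_comm (PadicInt.toZMod y₁), sub_self]
  apply padicCong_of_norm_le
  rw [pow_one, Rat.cast_sub, Rat.cast_div, Rat.cast_div, ← hx₁, ← hy₁, ← hx₂, ← hy₂,
    div_sub_div _ _ hy₁' hy₂', norm_div, ← PadicInt.coe_mul, ← PadicInt.coe_mul,
    ← PadicInt.coe_mul, ← PadicInt.coe_sub, PadicInt.padic_norm_e_of_padicInt,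
    PadicInt.padic_norm_e_of_padicInt, norm_mul, hy₁1, hy₂1, mul_one, div_one]
  exact PadicInt.norm_le_inv_of_toZMod_eq_zero hnum

theorem padicCong_gbcUnitPart {r : ℕ} {a c : ℚ} (hc : ¬ p ∣ c.den) (hac : a - r = p * c)
    (hr0 : r ≠ 0) (hr : r < p - 1) : PadicCong p 1 (gbcUnitPart p r a) (1 / (a * (a + 1))) := by
  obtain ⟨A, hA, hAr⟩ : ∃ A : ℤ_[p], (A : ℚ_[p]) = a ∧ PadicInt.toZMod A = r := by
    obtain ⟨C, hC⟩ : ∃ C : ℤ_[p], (C : ℚ_[p]) = c :=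
      ⟨⟨c, Padic.norm_ratCast_le_one_iff.2 hc⟩, rfl⟩
    refine ⟨r + p * C, ?_, by simp⟩
    have := congrArg (Rat.cast : ℚ → ℚ_[p]) hac
    push_cast [hC] at this ⊢
    linear_combination -this
  have hp2 : p ≠ 2 := by omega
  have hcast_ne_zero : ∀ n : ℕ, 0 < n → n < p → (n : ZMod p) ≠ 0 := fun n hn hnp => by
    rw [Ne, ZMod.natCast_eq_zero_iff]
    exact Nat.not_dvd_of_pos_of_lt hn hnp
  obtain ⟨k, hk⟩ := (Fact.out : p.Prime).dvd_choose_two_mul_pred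
  have hkp : ((2 * (p - 1)).choose (p - 1) : ℚ) / p = k := by
    rw [hk, Nat.cast_mul, mul_div_cancel_left₀ _ (Nat.cast_ne_zero.2 (by omega))]
  have hkmod : (k : ZMod p) = -1 := by
    simpa [hk, Nat.mul_div_cancel_left _ (Fact.out : p.Prime).pos] using
      ZMod.choose_two_mul_pred_div_self (p := p)
  refine padicCong_one_div_div (x₁ := (∏ i ∈ (range (p - 1)).erase r, (A - i)) *
      (∏ i ∈ (range (p - 1)).erase (p - 1 - r), (-1 - A - i)) * k)
    (y₁ := (p - 1)! ^ 2 * 4 ^ (p - 1)) (x₂ := 1) (y₂ := A * (A + 1))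
    (by push_cast [hA, hkp]; rfl) (by push_cast; rfl) (by simp) (by push_cast [hA]; rfl)
    ?_ ?_ ?_
  · rw [map_mul, map_pow, map_pow, map_natCast, map_ofNat,
      ZMod.factorial_pred_sq_mul_four_pow_pred hp2]
    exact one_ne_zero
  · rw [map_mul, map_add, map_one, hAr]
    exact mul_ne_zero (hcast_ne_zero r (by omega) (by omega))
      (by exact_mod_cast hcast_ne_zero (r + 1) (by omega) (by omega))
  · simp only [map_one, map_mul, map_add, map_pow, map_natCast, map_ofNat, map_prod, map_sub,
      map_neg, hAr, hkmod, ZMod.factorial_pred_sq_mul_four_pow_pred hp2]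
    linear_combination -ZMod.prod_erase_sub_mul_prod_erase_neg_one_sub hr0 hr

theorem stmt10_general (p : ℕ) (hp : p.Prime) (a : ℚ)
    (h0 : ¬ PadicCong p 1 a 0) (h1 : ¬ PadicCong p 1 a (-1))
    (r : ℕ) (hr : r < p) (har : PadicCong p 1 a r) :
    PadicCong p 3
      (gbc a (p - 1) * gbc (-1 - a) (p - 1) * (Nat.choose (2 * (p - 1)) (p - 1)) /
        (4 ^ (p - 1) * p))
      (-((a - r) / p * ((a - r) / p + 1)) / (a * (a + 1)) * p ^ 2) := by
  have := Fact.mk hp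
  obtain ⟨c, hc, hac⟩ := har
  rw [pow_one] at hac
  have hr0 : r ≠ 0 := by
    rintro rfl
    exact h0 ⟨c, hc, by simpa using hac⟩
  have hr1 : r < p - 1 := by
    refine lt_of_le_of_ne (by omega) fun hrp => h1 ⟨c + 1, by simpa using hc, ?_⟩
    rw [hrp, Nat.cast_sub hp.one_le, Nat.cast_one] at hac
    linear_combination hac
  have hc' : (a - r) / p = c := by
    rw [hac, mul_div_cancel_left₀ _ (Nat.cast_ne_zero.2 hp.ne_zero)]
  have hX : PadicCong p 2 (-(c * (c + 1)) * p ^ 2) 0 :=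
    ⟨-(c * (c + 1)), by simpa using hp.not_dvd_den_mul hc (by simpa using hc), by ring⟩
  rw [gbc_mul_gbc_mul_choose_div_eq hac hr0 hr1, hc',
    show -(c * (c + 1)) / (a * (a + 1)) * p ^ 2 = -(c * (c + 1)) * p ^ 2 * (1 / (a * (a + 1)))
      by ring]
  exact hX.mul hp (padicCong_gbcUnitPart hc hac hr0 hr1)

theorem stmt10 (p : ℕ) (hp : p.Prime) (hodd : Odd p) (a : ℚ) (ha : ¬ p ∣ a.den)
    (h0 : ¬ PadicCong p 1 a 0) (h1 : ¬ PadicCong p 1 a (-1))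
    (r : ℕ) (hr : r < p) (har : PadicCong p 1 a r) :
    PadicCong p 3
      (gbc a (p - 1) * gbc (-1 - a) (p - 1) * (Nat.choose (2 * (p - 1)) (p - 1)) /
        (4 ^ (p - 1) * p))
      (-((a - r) / p * ((a - r) / p + 1)) / (a * (a + 1)) * p ^ 2) :=
  stmt10_general p hp a h0 h1 r hr har
end
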